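/- arXiv:1702.01518 — 5 statements merged into one kernel-verified Lean document; each statement's English description precedes it below -/
import Mathlib

section
/- Let f : ℝ^n → ℝ be continuously differentiable on an open set containing the level set L = {x : f(x) ≤ f(x₀)}, bounded below on ℝ^n, and suppose its gradient is Lipschitz continuous on L, i.e. there exists L_c > 0 with ‖∇f(x) − ∇f(x̄)‖ ≤ L_c ‖x − x̄‖ for all x, x̄ ∈ L. Let (x_k) be generated by x_{k+1} = x_k + α_k p_k starting from x₀, where each p_k satisfies ⟨∇f(x_k), p_k⟩ < 0 and each step length α_k > 0 satisfies the Wolfe conditions f(x_k + α_k p_k) ≤ f(x_k) + c₁ α_k ⟨∇f(x_k), p_k⟩ and ⟨∇f(x_k + α_k p_k), p_k⟩ ≥ c₂ ⟨∇f(x_k), p_k⟩ with constants 0 < c₁ < c₂ < 1. Then the series ∑_k ⟨∇f(x_k), p_k⟩² / ‖p_k‖² converges (equivalently, ∑_k cos²θ_k ‖∇f(x_k)‖² < ∞, where cos θ_k = −⟨∇f(x_k), p_k⟩/(‖∇f(x_k)‖‖p_k‖)). -/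
open Filter Topology
open scoped InnerProductSpace

/-- Zoutendijk's theorem: under Wolfe-condition line searches with descent directions,
the series `∑ cos²θₖ ‖∇f(xₖ)‖² = ∑ ⟪∇f(xₖ), pₖ⟫² / ‖pₖ‖²` converges. -/
theorem zoutendijk {n : ℕ} (f : EuclideanSpace ℝ (Fin n) → ℝ)
    (x₀ : EuclideanSpace ℝ (Fin n)) (U : Set (EuclideanSpace ℝ (Fin n)))
    (hU : IsOpen U) (hLU : {x | f x ≤ f x₀} ⊆ U)
    (hf : ContDiffOn ℝ 1 f U)
    (hbdd : BddBelow (Set.range f))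
    (Lc : ℝ) (hLc : 0 < Lc)
    (hlip : ∀ x ∈ {x | f x ≤ f x₀}, ∀ y ∈ {x | f x ≤ f x₀},
      ‖gradient f x - gradient f y‖ ≤ Lc * ‖x - y‖)
    (c₁ c₂ : ℝ) (hc₁ : 0 < c₁) (hc₁₂ : c₁ < c₂) (hc₂ : c₂ < 1)
    (x p : ℕ → EuclideanSpace ℝ (Fin n)) (α : ℕ → ℝ)
    (hx0 : x 0 = x₀)
    (hiter : ∀ k, x (k + 1) = x k + α k • p k)
    (hdesc : ∀ k, ⟪gradient f (x k), p k⟫_ℝ < 0)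
    (hα : ∀ k, 0 < α k)
    (hwolfe1 : ∀ k, f (x k + α k • p k) ≤
      f (x k) + c₁ * α k * ⟪gradient f (x k), p k⟫_ℝ)
    (hwolfe2 : ∀ k, ⟪gradient f (x k + α k • p k), p k⟫_ℝ ≥
      c₂ * ⟪gradient f (x k), p k⟫_ℝ) :
    Summable (fun k => ⟪gradient f (x k), p k⟫_ℝ ^ 2 / ‖p k‖ ^ 2) := by
  have hpnorm : ∀ k, 0 < ‖p k‖ ^ 2 := by
    intro k
    have h := hdesc k
    have hne : p k ≠ 0 := by
      intro h0
      rw [h0, inner_zero_right] at h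
      linarith
    exact pow_pos (norm_pos_iff.mpr hne) 2
  have hL : ∀ k, f (x k) ≤ f x₀ := by
    intro k
    induction k with
    | zero => rw [hx0]
    | succ k ih =>
      have h1 := hwolfe1 k
      have hstep : c₁ * α k * ⟪gradient f (x k), p k⟫_ℝ ≤ 0 := by
        have hd := hdesc k
        have ha := hα k
        exact mul_nonpos_of_nonneg_of_nonpos (by positivity) hd.le
      rw [← hiter k] at h1
      linarith
  have hcpos : 0 < c₁ * (1 - c₂) / Lc := by
    have : 0 < 1 - c₂ := by linarith
    positivity
  have hdec : ∀ k, c₁ * (1 - c₂) / Lc *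
      (⟪gradient f (x k), p k⟫_ℝ ^ 2 / ‖p k‖ ^ 2) ≤ f (x k) - f (x (k + 1)) := by
    intro k
    have hlipk := hlip _ (hL (k + 1)) _ (hL k)
    have hnorm : ‖x (k + 1) - x k‖ = α k * ‖p k‖ := by
      rw [hiter k, add_sub_cancel_left, norm_smul, Real.norm_eq_abs,
        abs_of_pos (hα k)]
    have h2 := hwolfe2 k
    rw [← hiter k] at h2
    have hinner : (c₂ - 1) * ⟪gradient f (x k), p k⟫_ℝ ≤
        ⟪gradient f (x (k + 1)) - gradient f (x k), p k⟫_ℝ := by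
      rw [inner_sub_left]
      linarith
    have hub : ⟪gradient f (x (k + 1)) - gradient f (x k), p k⟫_ℝ ≤
        Lc * α k * ‖p k‖ ^ 2 := by
      calc ⟪gradient f (x (k + 1)) - gradient f (x k), p k⟫_ℝ
          ≤ ‖gradient f (x (k + 1)) - gradient f (x k)‖ * ‖p k‖ :=
            real_inner_le_norm _ _
        _ ≤ Lc * ‖x (k + 1) - x k‖ * ‖p k‖ :=
            mul_le_mul_of_nonneg_right hlipk (norm_nonneg _)
        _ = Lc * α k * ‖p k‖ ^ 2 := by rw [hnorm]; ring
    have hαlb : (c₂ - 1) * ⟪gradient f (x k), p k⟫_ℝ / (Lc * ‖p k‖ ^ 2) ≤ α k := by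
      rw [div_le_iff₀ (mul_pos hLc (hpnorm k))]
      nlinarith [hinner, hub]
    have h1 := hwolfe1 k
    rw [← hiter k] at h1
    have hφneg : ⟪gradient f (x k), p k⟫_ℝ < 0 := hdesc k
    have hkey : c₁ * α k * ⟪gradient f (x k), p k⟫_ℝ ≤
        c₁ * ((c₂ - 1) * ⟪gradient f (x k), p k⟫_ℝ / (Lc * ‖p k‖ ^ 2)) *
          ⟪gradient f (x k), p k⟫_ℝ := by
      exact mul_le_mul_of_nonpos_right (mul_le_mul_of_nonneg_left hαlb hc₁.le) hφneg.le
    have heq : c₁ * ((c₂ - 1) * ⟪gradient f (x k), p k⟫_ℝ / (Lc * ‖p k‖ ^ 2)) *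
        ⟪gradient f (x k), p k⟫_ℝ =
        -(c₁ * (1 - c₂) / Lc * (⟪gradient f (x k), p k⟫_ℝ ^ 2 / ‖p k‖ ^ 2)) := by
      field_simp
      ring
    rw [heq] at hkey
    linarith
  obtain ⟨B, hB⟩ := hbdd
  have hBle : ∀ y, B ≤ f y := fun y => hB ⟨y, rfl⟩
  refine summable_of_sum_range_le (c := (f x₀ - B) / (c₁ * (1 - c₂) / Lc))
    (fun k => by positivity) ?_
  intro N
  have htel : ∑ k ∈ Finset.range N, (f (x k) - f (x (k + 1))) = f (x 0) - f (x N) :=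
    Finset.sum_range_sub' (fun k => f (x k)) N
  have hmul : c₁ * (1 - c₂) / Lc *
      ∑ k ∈ Finset.range N, ⟪gradient f (x k), p k⟫_ℝ ^ 2 / ‖p k‖ ^ 2 ≤
      f (x 0) - f (x N) := by
    rw [← htel, Finset.mul_sum]
    exact Finset.sum_le_sum fun k _ => hdec k
  rw [le_div_iff₀ hcpos]
  have := hBle (x N)
  rw [hx0] at hmul
  linarith
end

section
/- Let f : ℝ^n → ℝ be continuously differentiable on an open set containing the level set L = {x : f(x) ≤ f(x₀)}, bounded below on ℝ^n, with gradient Lipschitz continuous on L. Let (B_k) be a sequence of symmetric positive definite n × n real matrices whose spectral condition numbers are uniformly bounded: there exists C > 0 such that λ_max(B_k)/λ_min(B_k) ≤ C for all k. Let (x_k) be generated by x_{k+1} = x_k + α_k p_k with p_k = −B_k⁻¹ ∇f(x_k), where ∇f(x_k) ≠ 0 and each α_k > 0 satisfies the Wolfe conditions with constants 0 < c₁ < c₂ < 1. Then ‖∇f(x_k)‖ → 0 as k → ∞. -/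
open Filter Topology
open scoped InnerProductSpace

variable {n : ℕ}

lemma aux_apply_basis (A : Matrix (Fin n) (Fin n) ℝ) (hA : A.IsHermitian) (j : Fin n) :
    Matrix.toEuclideanLin A (hA.eigenvectorBasis j) =
      hA.eigenvalues j • hA.eigenvectorBasis j := by
  ext i
  have := congrFun (hA.mulVec_eigenvectorBasis j) i
  simpa [Matrix.toEuclideanLin_apply] using this

lemma aux_inner_basis (A : Matrix (Fin n) (Fin n) ℝ) (hA : A.IsHermitian)
    (v : EuclideanSpace ℝ (Fin n)) (j : Fin n) :
    ⟪hA.eigenvectorBasis j, Matrix.toEuclideanLin A v⟫_ℝ =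
      hA.eigenvalues j * ⟪hA.eigenvectorBasis j, v⟫_ℝ := by
  have hsym := Matrix.isHermitian_iff_isSymmetric.mp hA
  rw [← hsym (hA.eigenvectorBasis j) v, aux_apply_basis, real_inner_smul_left]

lemma aux_norm_sq (b : OrthonormalBasis (Fin n) ℝ (EuclideanSpace ℝ (Fin n)))
    (v : EuclideanSpace ℝ (Fin n)) :
    ‖v‖ ^ 2 = ∑ i, ⟪b i, v⟫_ℝ ^ 2 := by
  have h := b.sum_inner_mul_inner v v
  rw [real_inner_self_eq_norm_sq] at h
  rw [← h]
  refine Finset.sum_congr rfl fun i _ => ?_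
  rw [real_inner_comm v (b i), sq]

lemma aux_inner_self (A : Matrix (Fin n) (Fin n) ℝ) (hA : A.IsHermitian)
    (v : EuclideanSpace ℝ (Fin n)) :
    ⟪v, Matrix.toEuclideanLin A v⟫_ℝ =
      ∑ i, hA.eigenvalues i * ⟪hA.eigenvectorBasis i, v⟫_ℝ ^ 2 := by
  have h := hA.eigenvectorBasis.sum_inner_mul_inner v (Matrix.toEuclideanLin A v)
  rw [← h]
  refine Finset.sum_congr rfl fun i _ => ?_
  rw [aux_inner_basis, real_inner_comm v (hA.eigenvectorBasis i), sq]
  ring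

lemma aux_norm_map_sq (A : Matrix (Fin n) (Fin n) ℝ) (hA : A.IsHermitian)
    (v : EuclideanSpace ℝ (Fin n)) :
    ‖Matrix.toEuclideanLin A v‖ ^ 2 =
      ∑ i, (hA.eigenvalues i * ⟪hA.eigenvectorBasis i, v⟫_ℝ) ^ 2 := by
  rw [aux_norm_sq hA.eigenvectorBasis]
  refine Finset.sum_congr rfl fun i _ => ?_
  rw [aux_inner_basis]

lemma aux_quad_lower (A : Matrix (Fin n) (Fin n) ℝ) (hpd : A.PosDef)
    (v : EuclideanSpace ℝ (Fin n)) [Nonempty (Fin n)] :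
    (⨅ i, hpd.1.eigenvalues i) * ‖v‖ ^ 2 ≤ ⟪v, Matrix.toEuclideanLin A v⟫_ℝ := by
  rw [aux_inner_self A hpd.1, aux_norm_sq hpd.1.eigenvectorBasis, Finset.mul_sum]
  refine Finset.sum_le_sum fun i _ => ?_
  have h1 : (⨅ i, hpd.1.eigenvalues i) ≤ hpd.1.eigenvalues i :=
    ciInf_le (Set.Finite.bddBelow (Set.finite_range _)) i
  exact mul_le_mul_of_nonneg_right h1 (sq_nonneg _)

lemma aux_norm_map_le (A : Matrix (Fin n) (Fin n) ℝ) (hpd : A.PosDef)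
    (v : EuclideanSpace ℝ (Fin n)) [Nonempty (Fin n)] :
    ‖Matrix.toEuclideanLin A v‖ ≤ (⨆ i, hpd.1.eigenvalues i) * ‖v‖ := by
  have hΛ0 : 0 ≤ ⨆ i, hpd.1.eigenvalues i := by
    obtain ⟨i⟩ := ‹Nonempty (Fin n)›
    exact le_trans (hpd.eigenvalues_pos i).le (le_ciSup (Set.Finite.bddAbove (Set.finite_range _)) i)
  have hsq : ‖Matrix.toEuclideanLin A v‖ ^ 2 ≤ ((⨆ i, hpd.1.eigenvalues i) * ‖v‖) ^ 2 := by
    rw [aux_norm_map_sq A hpd.1, mul_pow, aux_norm_sq hpd.1.eigenvectorBasis, Finset.mul_sum]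
    refine Finset.sum_le_sum fun i _ => ?_
    rw [mul_pow]
    refine mul_le_mul_of_nonneg_right ?_ (sq_nonneg _)
    have h1 : hpd.1.eigenvalues i ≤ ⨆ i, hpd.1.eigenvalues i :=
      le_ciSup (Set.Finite.bddAbove (Set.finite_range _)) i
    exact pow_le_pow_left₀ (hpd.eigenvalues_pos i).le h1 2
  have := Real.sqrt_le_sqrt hsq
  rwa [Real.sqrt_sq (norm_nonneg _), Real.sqrt_sq (by positivity)] at this

lemma aux_iInf_pos (A : Matrix (Fin n) (Fin n) ℝ) (hpd : A.PosDef) [Nonempty (Fin n)] :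
    0 < ⨅ i, hpd.1.eigenvalues i := by
  obtain ⟨i0, h0⟩ := Finite.exists_min hpd.1.eigenvalues
  exact lt_of_lt_of_le (hpd.eigenvalues_pos i0) (le_ciInf h0)

lemma aux_inv_apply (A : Matrix (Fin n) (Fin n) ℝ) (hpd : A.PosDef)
    (v : EuclideanSpace ℝ (Fin n)) :
    Matrix.toEuclideanLin A (Matrix.toEuclideanLin A⁻¹ v) = v := by
  have hdet : IsUnit A.det := hpd.det_pos.ne'.isUnit
  ext i
  simp [Matrix.toEuclideanLin_apply, Matrix.mulVec_mulVec, Matrix.mul_nonsing_inv A hdet]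
lemma aux_arith_key (C lmin lmax t P G : ℝ) (hC : 0 < C) (hl : 0 < lmin)
    (hle : lmax ≤ C * lmin) (h1 : lmin * P ^ 2 ≤ t) (h2 : G ≤ lmax * P)
    (hP : 0 < P) (hG : 0 ≤ G) : G * P ≤ C * t := by
  nlinarith [mul_le_mul_of_nonneg_right h2 hP.le,
    mul_le_mul_of_nonneg_right hle (sq_nonneg P)]

lemma aux_arith_main (Lc C c₁ c₂ a t G P2 : ℝ) (hLc : 0 < Lc) (hC : 0 < C)
    (hc₁ : 0 < c₁) (hc₂ : c₂ < 1) (ha : 0 < a) (ht : 0 < t) (hG : 0 ≤ G)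
    (h1 : (1 - c₂) * t ≤ Lc * a * P2) (hP2 : 0 < P2)
    (h2 : G ^ 2 * P2 ≤ C ^ 2 * t ^ 2) :
    c₁ * (1 - c₂) / (Lc * C ^ 2) * G ^ 2 ≤ c₁ * a * t := by
  have key : (1 - c₂) * G ^ 2 ≤ Lc * a * C ^ 2 * t := by
    have e1 : (1 - c₂) * t * G ^ 2 ≤ Lc * a * P2 * G ^ 2 :=
      mul_le_mul_of_nonneg_right h1 (sq_nonneg G)
    have e2 : Lc * a * (G ^ 2 * P2) ≤ Lc * a * (C ^ 2 * t ^ 2) :=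
      mul_le_mul_of_nonneg_left h2 (by positivity)
    have e3 : ((1 - c₂) * G ^ 2) * t ≤ (Lc * a * C ^ 2 * t) * t := by nlinarith
    exact le_of_mul_le_mul_right e3 ht
  rw [div_mul_eq_mul_div, div_le_iff₀ (by positivity)]
  nlinarith [mul_le_mul_of_nonneg_left key hc₁.le]

/-- q-line search convergence (Lemma 3.1): if the symmetric positive definite matrices `Bₖ`
have uniformly bounded condition numbers, then under the assumptions of Zoutendijk's theorem
the gradient norms tend to zero. -/
theorem qLineSearch_gradient_tendsto_zero {n : ℕ} (f : EuclideanSpace ℝ (Fin n) → ℝ)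
    (x₀ : EuclideanSpace ℝ (Fin n)) (U : Set (EuclideanSpace ℝ (Fin n)))
    (hU : IsOpen U) (hLU : {x | f x ≤ f x₀} ⊆ U)
    (hf : ContDiffOn ℝ 1 f U)
    (hbdd : BddBelow (Set.range f))
    (Lc : ℝ) (hLc : 0 < Lc)
    (hlip : ∀ x ∈ {x | f x ≤ f x₀}, ∀ y ∈ {x | f x ≤ f x₀},
      ‖gradient f x - gradient f y‖ ≤ Lc * ‖x - y‖)
    (B : ℕ → Matrix (Fin n) (Fin n) ℝ)
    (hBsymm : ∀ k, (B k).IsSymm)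
    (hBpos : ∀ k, (B k).PosDef)
    (C : ℝ) (hC : 0 < C)
    (hcond : ∀ k,
      (⨆ i, (hBpos k).1.eigenvalues i) / (⨅ i, (hBpos k).1.eigenvalues i) ≤ C)
    (c₁ c₂ : ℝ) (hc₁ : 0 < c₁) (hc₁₂ : c₁ < c₂) (hc₂ : c₂ < 1)
    (x p : ℕ → EuclideanSpace ℝ (Fin n)) (α : ℕ → ℝ)
    (hx0 : x 0 = x₀)
    (hgrad_ne : ∀ k, gradient f (x k) ≠ 0)
    (hp : ∀ k, p k = -(Matrix.toEuclideanLin (B k)⁻¹ (gradient f (x k))))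
    (hiter : ∀ k, x (k + 1) = x k + α k • p k)
    (hα : ∀ k, 0 < α k)
    (hwolfe1 : ∀ k, f (x k + α k • p k) ≤
      f (x k) + c₁ * α k * ⟪gradient f (x k), p k⟫_ℝ)
    (hwolfe2 : ∀ k, ⟪gradient f (x k + α k • p k), p k⟫_ℝ ≥
      c₂ * ⟪gradient f (x k), p k⟫_ℝ) :
    Tendsto (fun k => ‖gradient f (x k)‖) atTop (𝓝 0) := by
  rcases Nat.eq_zero_or_pos n with hn | hn
  · exfalso
    apply hgrad_ne 0
    subst hn
    ext i
    exact i.elim0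
  haveI : Nonempty (Fin n) := ⟨⟨0, hn⟩⟩
  set g : ℕ → EuclideanSpace ℝ (Fin n) := fun k => gradient f (x k) with hg
  set lmin : ℕ → ℝ := fun k => ⨅ i, (hBpos k).1.eigenvalues i with hlmin
  set lmax : ℕ → ℝ := fun k => ⨆ i, (hBpos k).1.eigenvalues i with hlmax
  have hlpos : ∀ k, 0 < lmin k := fun k => aux_iInf_pos (B k) (hBpos k)
  have hlle : ∀ k, lmax k ≤ C * lmin k := fun k => (div_le_iff₀ (hlpos k)).mp (hcond k)
  have hw1 : ∀ k, f (x (k + 1)) ≤ f (x k) + c₁ * α k * ⟪g k, p k⟫_ℝ := by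
    intro k; rw [hiter k]; exact hwolfe1 k
  have hw2 : ∀ k, ⟪g (k + 1), p k⟫_ℝ ≥ c₂ * ⟪g k, p k⟫_ℝ := by
    intro k
    have h := hwolfe2 k
    rw [← hiter k] at h
    exact h
  -- basic identities
  have hBp : ∀ k, Matrix.toEuclideanLin (B k) (p k) = -(g k) := by
    intro k
    rw [hp k, map_neg, aux_inv_apply (B k) (hBpos k)]
  have hgp : ∀ k, g k = -(Matrix.toEuclideanLin (B k) (p k)) := by
    intro k; rw [hBp k, neg_neg]
  have hpne : ∀ k, p k ≠ 0 := by
    intro k h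
    apply hgrad_ne k
    have h2 := hBp k
    rw [h, map_zero] at h2
    have : g k = 0 := by rw [← neg_neg (g k), ← h2, neg_zero]
    exact this
  have hppos : ∀ k, 0 < ‖p k‖ := fun k => norm_pos_iff.mpr (hpne k)
  -- quadratic form bounds
  have ht : ∀ k, lmin k * ‖p k‖ ^ 2 ≤ -⟪g k, p k⟫_ℝ := by
    intro k
    have h1 := aux_quad_lower (B k) (hBpos k) (p k)
    have h2 : ⟪g k, p k⟫_ℝ = -⟪p k, Matrix.toEuclideanLin (B k) (p k)⟫_ℝ := by
      rw [hgp k, inner_neg_left, real_inner_comm]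
    rw [h2, neg_neg]
    exact h1
  have htneg : ∀ k, ⟪g k, p k⟫_ℝ < 0 := by
    intro k
    have h1 := mul_pos (hlpos k) (pow_pos (hppos k) 2)
    linarith only [h1, ht k]
  have hgle : ∀ k, ‖g k‖ ≤ lmax k * ‖p k‖ := by
    intro k
    have h := aux_norm_map_le (B k) (hBpos k) (p k)
    rwa [hgp k, norm_neg]
  have hkey : ∀ k, ‖g k‖ * ‖p k‖ ≤ C * (-⟪g k, p k⟫_ℝ) :=
    fun k => aux_arith_key C (lmin k) (lmax k) _ _ _ hC (hlpos k) (hlle k)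
      (ht k) (hgle k) (hppos k) (norm_nonneg _)
  -- monotone decrease and level set membership
  have hfdec : ∀ k, f (x (k + 1)) ≤ f (x k) := by
    intro k
    have h1 := mul_pos (mul_pos hc₁ (hα k)) (neg_pos.mpr (htneg k))
    linarith only [hw1 k, h1]
  have hmem : ∀ k, f (x k) ≤ f x₀ := by
    intro k
    induction k with
    | zero => rw [hx0]
    | succ k ih => exact (hfdec k).trans ih
  -- step length lower bound via Lipschitz
  have hstep : ∀ k, (1 - c₂) * (-⟪g k, p k⟫_ℝ) ≤ Lc * α k * ‖p k‖ ^ 2 := by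
    intro k
    have hdiff : (c₂ - 1) * ⟪g k, p k⟫_ℝ ≤ ⟪g (k + 1) - g k, p k⟫_ℝ := by
      rw [inner_sub_left]
      linarith only [hw2 k]
    have hCS : ⟪g (k + 1) - g k, p k⟫_ℝ ≤ ‖g (k + 1) - g k‖ * ‖p k‖ :=
      real_inner_le_norm _ _
    have hLip : ‖g (k + 1) - g k‖ ≤ Lc * (α k * ‖p k‖) := by
      have h := hlip (x (k + 1)) (hmem (k + 1)) (x k) (hmem k)
      have hxd : ‖x (k + 1) - x k‖ = α k * ‖p k‖ := by
        rw [hiter k]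
        simp [norm_smul, abs_of_pos (hα k)]
      rw [hxd] at h
      exact h
    have h1 : ‖g (k + 1) - g k‖ * ‖p k‖ ≤ Lc * (α k * ‖p k‖) * ‖p k‖ :=
      mul_le_mul_of_nonneg_right hLip (norm_nonneg _)
    have h2 : Lc * (α k * ‖p k‖) * ‖p k‖ = Lc * α k * ‖p k‖ ^ 2 := by ring
    linarith only [hdiff, hCS, h1, h2.le]
  -- key decrease estimate
  set D : ℝ := c₁ * (1 - c₂) / (Lc * C ^ 2) with hD
  have hDpos : 0 < D := by
    rw [hD]
    exact div_pos (mul_pos hc₁ (by linarith only [hc₂])) (mul_pos hLc (pow_pos hC 2))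
  have hsuff : ∀ k, D * ‖g k‖ ^ 2 ≤ f (x k) - f (x (k + 1)) := by
    intro k
    have ht0 : 0 < -⟪g k, p k⟫_ℝ := by linarith only [htneg k]
    have hsq : (‖g k‖ * ‖p k‖) ^ 2 ≤ (C * (-⟪g k, p k⟫_ℝ)) ^ 2 := by
      have := hkey k
      nlinarith [mul_nonneg (norm_nonneg (g k)) (norm_nonneg (p k)), hC.le, ht0.le]
    have h2' : ‖g k‖ ^ 2 * ‖p k‖ ^ 2 ≤ C ^ 2 * (-⟪g k, p k⟫_ℝ) ^ 2 := by
      have e : (‖g k‖ * ‖p k‖) ^ 2 = ‖g k‖ ^ 2 * ‖p k‖ ^ 2 := by ring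
      have e2 : (C * (-⟪g k, p k⟫_ℝ)) ^ 2 = C ^ 2 * (-⟪g k, p k⟫_ℝ) ^ 2 := by ring
      rw [← e, ← e2]; exact hsq
    have hmain := aux_arith_main Lc C c₁ c₂ (α k) (-⟪g k, p k⟫_ℝ) (‖g k‖)
      (‖p k‖ ^ 2) hLc hC hc₁ hc₂ (hα k) ht0 (norm_nonneg _) (hstep k)
      (pow_pos (hppos k) 2) h2'
    have := hw1 k
    rw [hD]
    linarith only [hmain, this]
  -- summation
  obtain ⟨m, hm⟩ := hbdd
  have hlow : ∀ k, m ≤ f (x k) := fun k => hm (Set.mem_range_self (x k))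
  have htel : ∀ N, ∑ k ∈ Finset.range N, D * ‖g k‖ ^ 2 ≤ f x₀ - f (x N) := by
    intro N
    induction N with
    | zero => simp [hx0]
    | succ N ih =>
      rw [Finset.sum_range_succ]
      linarith only [ih, hsuff N]
  have hsum : ∀ N, ∑ k ∈ Finset.range N, D * ‖g k‖ ^ 2 ≤ f x₀ - m :=
    fun N => by linarith only [htel N, hlow N]
  have hsummable : Summable (fun k => D * ‖g k‖ ^ 2) :=
    summable_of_sum_range_le (fun k => by positivity) hsum
  have h0 : Tendsto (fun k => D * ‖g k‖ ^ 2) atTop (𝓝 0) :=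
    hsummable.tendsto_atTop_zero
  have h2 : Tendsto (fun k => ‖g k‖ ^ 2) atTop (𝓝 0) := by
    have h := h0.const_mul (1 / D)
    rw [mul_zero] at h
    refine h.congr fun k => ?_
    field_simp
  have h3 : Tendsto (fun k => Real.sqrt (‖g k‖ ^ 2)) atTop (𝓝 (Real.sqrt 0)) :=
    (Real.continuous_sqrt.tendsto 0).comp h2
  rw [Real.sqrt_zero] at h3
  refine h3.congr fun k => ?_
  rw [Real.sqrt_sq (norm_nonneg _)]
end

section
/- (Dennis–Moré characterization, as stated in Theorem 3.1 of the paper with unit step length.) Let f : ℝ^n → ℝ be twice continuously differentiable in a neighborhood of x*, where ∇f(x*) = 0 and the Hessian ∇²f(x*) is positive definite. Let (B_k) be a sequence of invertible n × n real matrices, and let (x_k) be generated by x_{k+1} = x_k + p_k with p_k = −B_k⁻¹ ∇f(x_k), p_k ≠ 0 for all k, and suppose x_k → x*. Then (x_k) converges to x* superlinearly, i.e. ‖x_{k+1} − x*‖ / ‖x_k − x*‖ → 0, if and only if lim_{k→∞} ‖(B_k − ∇²f(x*)) p_k‖ / ‖p_k‖ = 0. -/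
/-!
Write `e_k = x_k - x*`, let `H` be the Hessian at `x*` and `r_k = ∇f(x_k) - H e_k`, which is
`o(e_k)` because `∇f(x*) = 0`. From `B_k p_k = -∇f(x_k)` and `p_k = e_{k+1} - e_k` one gets
`(H - B_k) p_k = H e_{k+1} + r_k`, and positive definiteness makes `H` invertible. If
`e_{k+1} = o(e_k)`, then `e_k = O(p_k)`, so the right-hand side is `o(p_k)`. Conversely, if it is
`o(p_k)`, then `e_{k+1} = o(p_k) + O(r_k)`; absorbing the `o(p_k)` term into
`p_k = e_{k+1} - e_k` gives `p_k = O(e_k)`, hence `e_{k+1} = o(e_k)`.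
-/

open Filter Topology Asymptotics
open scoped InnerProductSpace

namespace Asymptotics

variable {α E F : Type*} {l : Filter α}

theorem isLittleO_iff_tendsto_norm_div_norm [SeminormedAddCommGroup E] [NormedAddCommGroup F]
    {f : α → E} {g : α → F} (hg : ∀ a, g a ≠ 0) :
    f =o[l] g ↔ Tendsto (fun a => ‖f a‖ / ‖g a‖) l (𝓝 0) := by
  rw [← isLittleO_norm_norm, isLittleO_iff_tendsto]
  exact fun a ha => absurd (norm_eq_zero.mp ha) (hg a)

theorem IsBigO.of_add_isLittleO [SeminormedAddCommGroup E] {w s t : α → E}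
    (hw : w =O[l] (s + t)) (hs : s =o[l] w) : w =O[l] t := by
  simpa using hw.trans (hs.trans_isBigO hw).right_isBigO_sub

variable {𝕜 : Type*} [NontriviallyNormedField 𝕜] [NormedAddCommGroup E] [NormedSpace 𝕜 E]
  [NormedAddCommGroup F] [NormedSpace 𝕜 F]

/-- With `u, v` consecutive errors and `r` the linearization residual, `H v + r` is the
Dennis–Moré defect `(H - B) (v - u)`. -/
theorem isLittleO_iff_map_add_isLittleO_sub (H : E ≃L[𝕜] F) {u v : α → E} {r : α → F}
    (hr : r =o[l] u) :
    v =o[l] u ↔ (fun a => H (v a) + r a) =o[l] (v - u) := by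
  constructor
  · intro hv
    have hu : u =O[l] (v - u) :=
      hv.right_isBigO_sub.neg_right.congr_right fun a => neg_sub (u a) (v a)
    exact ((H.isBigO_comp v l).trans_isLittleO hv).add hr |>.trans_isBigO hu
  · intro hs
    have hv_eq : v = fun a => H.symm (H (v a) + r a) - H.symm (r a) := by
      ext a; simp only [map_add, ContinuousLinearEquiv.symm_apply_apply, add_sub_cancel_right]
    have hr' : (fun a => H.symm (r a)) =o[l] u := (H.symm.isBigO_comp r l).trans_isLittleO hr
    have hw : (v - u) =O[l] u := by
      refine (IsBigO.of_add_isLittleO (s := fun a => H.symm (H (v a) + r a))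
        (t := fun a => -H.symm (r a) - u a) ?_ ?_).trans ?_
      · refine (isBigO_refl _ _).congr_right fun a => ?_
        conv_lhs => rw [hv_eq]
        simp only [Pi.sub_apply, Pi.add_apply]
        abel
      · exact (H.symm.isBigO_comp _ l).trans_isLittleO hs
      · exact hr'.isBigO.neg_left.sub (isBigO_refl u l)
    rw [hv_eq]
    exact ((H.symm.isBigO_comp _ l).trans_isLittleO (hs.trans_isBigO hw)).sub hr'

end Asymptotics

theorem ContDiffAt.gradient {F : Type*} [NormedAddCommGroup F] [InnerProductSpace ℝ F]
    [CompleteSpace F] {f : F → ℝ} {x : F} {n : WithTop ℕ∞} (hf : ContDiffAt ℝ (n + 1) f x) :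
    ContDiffAt ℝ n (gradient f) x :=
  (InnerProductSpace.toDual ℝ F).symm.toContinuousLinearEquiv.contDiff.contDiffAt.comp x
    (hf.fderiv_right le_rfl)

theorem LinearMap.injective_of_inner_map_self_pos {E : Type*} [NormedAddCommGroup E]
    [InnerProductSpace ℝ E] {T : E →ₗ[ℝ] E} (hT : ∀ v, v ≠ 0 → 0 < ⟪v, T v⟫_ℝ) :
    Function.Injective T := by
  refine (injective_iff_map_eq_zero T).mpr fun v hv => ?_
  by_contra hne
  simpa [hv] using hT v hne

theorem Matrix.toLpLin_apply_toLpLin_inv {ι R : Type*} [Fintype ι] [DecidableEq ι] [CommRing R]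
    (p : ENNReal) {A : Matrix ι ι R} (hA : IsUnit A) (v : WithLp p (ι → R)) :
    toLpLin p p A (toLpLin p p A⁻¹ v) = v := by
  rw [← LinearMap.comp_apply, ← toLpLin_mul_same,
    mul_nonsing_inv _ ((isUnit_iff_isUnit_det A).mp hA), toLpLin_one, LinearMap.id_apply]

/-- Dennis–Moré characterization (Theorem 3.1 with unit step length): the iteration
`x_{k+1} = x_k - B_k⁻¹ ∇f(x_k)` converging to a minimizer `x*` with positive definite
Hessian converges superlinearly iff `‖(B_k - ∇²f(x*)) p_k‖ / ‖p_k‖ → 0`. -/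
theorem dennis_more_characterization {n : ℕ} (f : EuclideanSpace ℝ (Fin n) → ℝ)
    (xs : EuclideanSpace ℝ (Fin n))
    (U : Set (EuclideanSpace ℝ (Fin n))) (hU : U ∈ 𝓝 xs)
    (hf : ContDiffOn ℝ 2 f U)
    (hgrad0 : gradient f xs = 0)
    (hHessPos : ∀ v : EuclideanSpace ℝ (Fin n), v ≠ 0 →
      0 < ⟪v, fderiv ℝ (gradient f) xs v⟫_ℝ)
    (B : ℕ → Matrix (Fin n) (Fin n) ℝ) (hBinv : ∀ k, IsUnit (B k))
    (x p : ℕ → EuclideanSpace ℝ (Fin n))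
    (hp : ∀ k, p k = -(Matrix.toEuclideanLin (B k)⁻¹ (gradient f (x k))))
    (hpne : ∀ k, p k ≠ 0)
    (hiter : ∀ k, x (k + 1) = x k + p k)
    (hconv : Tendsto x atTop (𝓝 xs)) :
    Tendsto (fun k => ‖x (k + 1) - xs‖ / ‖x k - xs‖) atTop (𝓝 0) ↔
      Tendsto (fun k =>
        ‖Matrix.toEuclideanLin (B k) (p k) - fderiv ℝ (gradient f) xs (p k)‖ / ‖p k‖)
        atTop (𝓝 0) := by
  set H := fderiv ℝ (gradient f) xs
  have hH : HasFDerivAt (gradient f) H xs :=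
    ((hf.contDiffAt hU).gradient (n := 1)).differentiableAt one_ne_zero |>.hasFDerivAt
  let e := (LinearEquiv.ofInjectiveEndo H.toLinearMap
    (LinearMap.injective_of_inner_map_self_pos hHessPos)).toContinuousLinearEquiv
  have hres : (fun k => gradient f (x k) - H (x k - xs)) =o[atTop] fun k => x k - xs := by
    simpa [Function.comp_def, hgrad0] using hH.isLittleO.comp_tendsto hconv
  have hBp : ∀ k, Matrix.toEuclideanLin (B k) (p k) = -gradient f (x k) := fun k => by
    rw [hp k, map_neg, Matrix.toLpLin_apply_toLpLin_inv 2 (hBinv k)]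
  have hxne : ∀ k, x k - xs ≠ 0 := fun k h =>
    hpne k (by rw [hp k, sub_eq_zero.mp h, hgrad0, map_zero, neg_zero])
  have hsecant : ∀ k, -(e (x (k + 1) - xs) + (gradient f (x k) - H (x k - xs))) =
      Matrix.toEuclideanLin (B k) (p k) - H (p k) := fun k => by
    change -(H _ + _) = _
    rw [hBp k, hiter k]
    simp only [map_sub, map_add]
    abel
  rw [← isLittleO_iff_tendsto_norm_div_norm hxne, ← isLittleO_iff_tendsto_norm_div_norm hpne,
    isLittleO_iff_map_add_isLittleO_sub e hres, ← isLittleO_neg_left]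
  refine isLittleO_congr (.of_forall hsecant) (.of_forall fun k => ?_)
  simp [hiter k]
end

section
/- For c ≠ 0, define f_c : ℝ² → ℝ by f_c(x, y) = 0.05(y − x²)² + (1 − x)² + c if x ≥ c, and f_c(x, y) = (x/c)(1 − x)² + 0.05(y − x²)² − ((1 − c)²/c)(x − c) + c if x < c. Then f_c is continuously differentiable (C¹) on all of ℝ². -/
/-!
Write `f c (x, y) = 0.05 (y - x²)² + P x`, where `P` glues the polynomial `(1 - x)² + c` on
`x ≥ c` to the polynomial `(x / c)(1 - x)² - ((1 - c)² / c)(x - c) + c` on `x < c`. Both pieces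
take the value `(1 - c)² + c` and have slope `-2 (1 - c)` at `x = c`, so `P` is `C¹`: off `c` it
is locally a polynomial, and at `c` its derivative is the continuous gluing of the two
derivatives.
-/

open Filter Topology

theorem contDiff_one_if_le_of_hasDerivAt {E : Type*} [NormedAddCommGroup E]
    [NormedSpace ℝ E] {g h : ℝ → E} {a : ℝ} {d : E} (hg : ContDiff ℝ 1 g) (hh : ContDiff ℝ 1 h)
    (hga : g a = h a) (hgd : HasDerivAt g d a) (hhd : HasDerivAt h d a) :
    ContDiff ℝ 1 fun t => if a ≤ t then g t else h t := by
  set F' : ℝ → E := fun t => if a ≤ t then deriv g t else deriv h t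
  have hF'_cont : Continuous F' :=
    (hg.continuous_deriv le_rfl).if_le (hh.continuous_deriv le_rfl) continuous_const
      continuous_id fun t (ht : a = t) => by rw [← ht, hgd.deriv, hhd.deriv]
  have hF_cont : ContinuousAt (fun t => if a ≤ t then g t else h t) a :=
    (hg.continuous.if_le hh.continuous continuous_const continuous_id
      fun t (ht : a = t) => by rw [← ht, hga]).continuousAt
  have hF_deriv_of_ne :
      ∀ t ≠ a, HasDerivAt (fun t => if a ≤ t then g t else h t) (F' t) t := by
    intro t ht
    rcases ht.lt_or_gt with ht | ht
    · have h_eq : (fun t => if a ≤ t then g t else h t) =ᶠ[𝓝 t] h := by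
        filter_upwards [Iio_mem_nhds ht] with s hs
        simp [not_le.mpr (Set.mem_Iio.mp hs)]
      simpa [F', not_le.mpr ht] using
        (hh.differentiable one_ne_zero t).hasDerivAt.congr_of_eventuallyEq h_eq
    · have h_eq : (fun t => if a ≤ t then g t else h t) =ᶠ[𝓝 t] g := by
        filter_upwards [Ioi_mem_nhds ht] with s hs
        simp [(Set.mem_Ioi.mp hs).le]
      simpa [F', ht.le] using
        (hg.differentiable one_ne_zero t).hasDerivAt.congr_of_eventuallyEq h_eq
  have hF_deriv := hasDerivAt_of_hasDerivAt_of_ne' hF_deriv_of_ne hF_cont hF'_cont.continuousAt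
  rw [contDiff_one_iff_deriv]
  refine ⟨fun t => (hF_deriv t).differentiableAt, ?_⟩
  rwa [show deriv _ = F' from funext fun t => (hF_deriv t).deriv]

/-- The piecewise function `f_c` from the paper is continuously differentiable on all of ℝ². -/
theorem fc_contDiff_one (c : ℝ) (hc : c ≠ 0) (f : ℝ × ℝ → ℝ)
    (hf : ∀ x y : ℝ, f (x, y) =
      if c ≤ x then 0.05 * (y - x ^ 2) ^ 2 + (1 - x) ^ 2 + c
      else (x / c) * (1 - x) ^ 2 + 0.05 * (y - x ^ 2) ^ 2 - ((1 - c) ^ 2 / c) * (x - c) + c) :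
    ContDiff ℝ 1 f := by
  set P : ℝ → ℝ := fun x =>
    if c ≤ x then (1 - x) ^ 2 + c else (x / c) * (1 - x) ^ 2 - ((1 - c) ^ 2 / c) * (x - c) + c
  have hfP : f = fun p => 0.05 * (p.2 - p.1 ^ 2) ^ 2 + P p.1 := by
    funext ⟨x, y⟩
    rw [hf]
    simp only [P]
    split_ifs <;> ring
  have h_right : HasDerivAt (fun x => (1 - x) ^ 2 + c) (-2 * (1 - c)) c :=
    ((((hasDerivAt_id' c).const_sub 1).fun_pow 2).add_const c).congr_deriv (by ring)
  have h_left : HasDerivAt (fun x => (x / c) * (1 - x) ^ 2 - ((1 - c) ^ 2 / c) * (x - c) + c)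
      (-2 * (1 - c)) c :=
    (((((hasDerivAt_id' c).div_const c).fun_mul
      (((hasDerivAt_id' c).const_sub 1).fun_pow 2)).fun_sub
      (((hasDerivAt_id' c).sub_const c).const_mul ((1 - c) ^ 2 / c))).add_const c).congr_deriv
      (by field_simp; ring)
  have hP : ContDiff ℝ 1 P :=
    contDiff_one_if_le_of_hasDerivAt (by fun_prop) (by fun_prop (disch := exact hc))
      (by field_simp; ring) h_right h_left
  rw [hfP]
  exact (by fun_prop : ContDiff ℝ 1 fun p : ℝ × ℝ => 0.05 * (p.2 - p.1 ^ 2) ^ 2).add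
    (hP.comp contDiff_fst)
end

section
/- For c ≠ 0 with c ≠ 1, define f_c : ℝ² → ℝ by f_c(x, y) = 0.05(y − x²)² + (1 − x)² + c if x ≥ c, and f_c(x, y) = (x/c)(1 − x)² + 0.05(y − x²)² − ((1 − c)²/c)(x − c) + c if x < c. Then for any fixed y ∈ ℝ, the function x ↦ ∂f_c/∂x (x, y) is not differentiable at x = c; in particular, the second partial derivative ∂²f_c/∂x² does not exist at any point (c, y), so f_c is not twice differentiable. -/
/-!
Write `f_c(x, y) = 0.05 (y - x²)² + c + h_c(x)` with `h_c = fcProfile c`. The two pieces of `h_c`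
and those of its derivative `h_c' = fcProfileDeriv c` agree at `c`, so `∂f_c/∂x (t, y)` is a
polynomial in `t` plus `h_c'(t)`. But `h_c'` has right derivative `2` and left derivative
`(6c - 4)/c` at `c`, and these differ unless `c = 1`.
-/

open Set

theorem fderiv_apply_one_zero_eq_deriv {E F : Type*} [NormedAddCommGroup E] [NormedSpace ℝ E]
    [NormedAddCommGroup F] [NormedSpace ℝ F] {f : ℝ × E → F} {t : ℝ} {y : E}
    (hf : DifferentiableAt ℝ f (t, y)) :
    fderiv ℝ f (t, y) (1, 0) = deriv (fun x => f (x, y)) t :=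
  (hf.hasFDerivAt.comp_hasDerivAt t ((hasDerivAt_id t).prodMk (hasDerivAt_const t y))).deriv.symm

section Piecewise

variable {u v : ℝ → ℝ} {a u' v' d : ℝ}

theorem hasDerivAt_ite_le_iff (hu : HasDerivAt u u' a) (hv : HasDerivAt v v' a)
    (hval : u a = v a) :
    HasDerivAt (fun x => if a ≤ x then u x else v x) d a ↔ d = u' ∧ d = v' := by
  have hright : ∀ x ∈ Ici a, (if a ≤ x then u x else v x) = u x := fun x hx => if_pos hx
  have hleft : ∀ x ∈ Iic a, (if a ≤ x then u x else v x) = v x := by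
    intro x hx
    rcases (mem_Iic.1 hx).eq_or_lt with rfl | hlt
    · exact (if_pos le_rfl).trans hval
    · exact if_neg hlt.not_ge
  constructor
  · intro hd
    exact ⟨(uniqueDiffWithinAt_Ici a).eq_deriv _
        (hd.hasDerivWithinAt.congr_of_mem (fun x hx => (hright x hx).symm) self_mem_Ici)
        hu.hasDerivWithinAt,
      (uniqueDiffWithinAt_Iic a).eq_deriv _
        (hd.hasDerivWithinAt.congr_of_mem (fun x hx => (hleft x hx).symm) self_mem_Iic)
        hv.hasDerivWithinAt⟩
  · rintro ⟨rfl, rfl⟩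
    rw [← hasDerivWithinAt_univ, ← Iic_union_Ici]
    exact (hv.hasDerivWithinAt.congr_of_mem hleft self_mem_Iic).union
      (hu.hasDerivWithinAt.congr_of_mem hright self_mem_Ici)

theorem not_differentiableAt_ite_le (hu : HasDerivAt u u' a) (hv : HasDerivAt v v' a)
    (hval : u a = v a) (hne : u' ≠ v') :
    ¬DifferentiableAt ℝ (fun x => if a ≤ x then u x else v x) a := fun hd =>
  let ⟨h₁, h₂⟩ := (hasDerivAt_ite_le_iff hu hv hval).1 hd.hasDerivAt
  hne (h₁.symm.trans h₂)

theorem hasDerivAt_ite_le {u' v' : ℝ → ℝ} (hu : ∀ x, HasDerivAt u (u' x) x)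
    (hv : ∀ x, HasDerivAt v (v' x) x) (hval : u a = v a) (hder : u' a = v' a) (x : ℝ) :
    HasDerivAt (fun x => if a ≤ x then u x else v x) (if a ≤ x then u' x else v' x) x := by
  rcases lt_trichotomy x a with hlt | rfl | hgt
  · rw [if_neg hlt.not_ge]
    refine (hv x).congr_of_eventuallyEq ?_
    filter_upwards [Iio_mem_nhds hlt] with t ht using if_neg (not_le.2 ht)
  · rw [if_pos le_rfl, hasDerivAt_ite_le_iff (hu x) (hv x) hval]
    exact ⟨rfl, hder⟩
  · rw [if_pos hgt.le]
    refine (hu x).congr_of_eventuallyEq ?_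
    filter_upwards [Ioi_mem_nhds hgt] with t ht using if_pos (le_of_lt ht)

end Piecewise

noncomputable def fcProfile (c x : ℝ) : ℝ :=
  if c ≤ x then (1 - x) ^ 2 else x / c * (1 - x) ^ 2 - (1 - c) ^ 2 / c * (x - c)

noncomputable def fcProfileDeriv (c x : ℝ) : ℝ :=
  if c ≤ x then -2 * (1 - x) else ((1 - x) ^ 2 - 2 * x * (1 - x) - (1 - c) ^ 2) / c

variable {c : ℝ}

theorem hasDerivAt_fcProfile (hc : c ≠ 0) (x : ℝ) :
    HasDerivAt (fcProfile c) (fcProfileDeriv c x) x := by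
  have hright (x : ℝ) : HasDerivAt (fun x => (1 - x) ^ 2) (-2 * (1 - x)) x :=
    (((hasDerivAt_id' x).const_sub 1).fun_pow 2).congr_deriv (by ring)
  have hleft (x : ℝ) : HasDerivAt (fun x => x / c * (1 - x) ^ 2 - (1 - c) ^ 2 / c * (x - c))
      (((1 - x) ^ 2 - 2 * x * (1 - x) - (1 - c) ^ 2) / c) x :=
    ((((hasDerivAt_id' x).div_const c).mul (((hasDerivAt_id' x).const_sub 1).fun_pow 2)).sub
      (((hasDerivAt_id' x).sub_const c).const_mul ((1 - c) ^ 2 / c))).congr_deriv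
      (by field_simp; ring)
  exact hasDerivAt_ite_le hright hleft (by field_simp; ring) (by field_simp; ring) x

theorem not_differentiableAt_fcProfileDeriv (hc : c ≠ 0) (hc1 : c ≠ 1) :
    ¬DifferentiableAt ℝ (fcProfileDeriv c) c := by
  unfold fcProfileDeriv
  refine not_differentiableAt_ite_le (u' := 2) (v' := (6 * c - 4) / c) ?_ ?_ ?_ ?_
  · exact (((hasDerivAt_id' c).const_sub 1).const_mul (-2)).congr_deriv (by ring)
  · exact (((((hasDerivAt_id' c).const_sub 1).fun_pow 2).sub
      (((hasDerivAt_id' c).const_mul 2).mul ((hasDerivAt_id' c).const_sub 1))).sub_const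
      ((1 - c) ^ 2)).div_const c |>.congr_deriv (by ring)
  · field_simp
    ring
  · rw [ne_eq, eq_div_iff hc]
    intro h
    exact hc1 (by linarith)

/-- For `c ≠ 0, 1`, the partial derivative `∂f_c/∂x` of the piecewise function `f_c`
is not differentiable (in `x`) at `x = c`, for any fixed `y`; hence `∂²f_c/∂x²` does not
exist at any point `(c, y)` and `f_c` is not twice differentiable. -/
theorem fc_second_partial_not_exists (c : ℝ) (hc : c ≠ 0) (hc1 : c ≠ 1) (f : ℝ × ℝ → ℝ)
    (hf : ∀ x y : ℝ, f (x, y) =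
      if c ≤ x then 0.05 * (y - x ^ 2) ^ 2 + (1 - x) ^ 2 + c
      else (x / c) * (1 - x) ^ 2 + 0.05 * (y - x ^ 2) ^ 2 - ((1 - c) ^ 2 / c) * (x - c) + c) :
    ∀ y : ℝ, ¬ DifferentiableAt ℝ
      (fun t : ℝ => fderiv ℝ f (t, y) (1, 0)) c := by
  intro y hdiff
  have hf_eq : f = fun p => 0.05 * (p.2 - p.1 ^ 2) ^ 2 + c + fcProfile c p.1 := by
    ext ⟨x, w⟩
    rw [hf, fcProfile]
    split_ifs <;> ring
  have hsection (t : ℝ) : HasDerivAt (fun x => f (x, y))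
      (0.05 * (2 * (y - t ^ 2) * -(2 * t)) + fcProfileDeriv c t) t := by
    subst hf_eq
    exact (((((hasDerivAt_pow 2 t).const_sub y).fun_pow 2).const_mul 0.05).add_const c).add
      (hasDerivAt_fcProfile hc t) |>.congr_deriv (by ring)
  have hprofile : Differentiable ℝ (fcProfile c) :=
    fun x => (hasDerivAt_fcProfile hc x).differentiableAt
  have hpartial : (fun t => fderiv ℝ f (t, y) (1, 0))
      = fun t => 0.05 * (2 * (y - t ^ 2) * -(2 * t)) + fcProfileDeriv c t := by
    funext t
    rw [fderiv_apply_one_zero_eq_deriv (by rw [hf_eq]; fun_prop), (hsection t).deriv]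
  rw [hpartial, DifferentiableAt.fun_add_iff_right (by fun_prop)] at hdiff
  exact not_differentiableAt_fcProfileDeriv hc hc1 hdiff
end
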